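/- Let ∇ be the torsion-free connection on ℝ² whose only nonzero Christoffel symbols in the standard coordinates are Γ₂₂² = 2, Γ₁₂¹ = Γ₂₁¹ = Γ₁₁² = 1. Then the curvature R(∂₁,∂₂)∂₂ = ∂₁ and R(∂₂,∂₁)∂₁ = ∂₂, i.e. for every nonzero tangent vector the Jacobi operator has eigenvalues {0, λ(X)} with λ(X) > 0; in particular the symmetric Ricci tensor is positive definite. -/

import Mathlib

/-- The (constant) Christoffel symbols `Γ_{ij}{}^k` of Example 1.6 with `m = 2`, `ε = 0`:
`Γ₂₂² = 2`, `Γ₁₂¹ = Γ₂₁¹ = Γ₁₁² = 1`, all others zero (indices `0,1` for `1,2`). -/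
noncomputable def Γex : Fin 2 → Fin 2 → Fin 2 → ℝ := fun i j k =>
  if i = 1 ∧ j = 1 ∧ k = 1 then 2
  else if (i = 0 ∧ j = 1 ∧ k = 0) ∨ (i = 1 ∧ j = 0 ∧ k = 0) ∨ (i = 0 ∧ j = 0 ∧ k = 1) then 1
  else 0

/-- The curvature `R_{ijk}{}^l = ∂ᵢΓ_{jk}{}^l - ∂ⱼΓ_{ik}{}^l + Γ_{in}{}^lΓ_{jk}{}^n
- Γ_{jn}{}^lΓ_{ik}{}^n` at the point `p` (the Christoffel symbols are constant). -/
noncomputable def Rex (p : EuclideanSpace ℝ (Fin 2)) (i j k l : Fin 2) : ℝ :=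
  fderiv ℝ (fun _ : EuclideanSpace ℝ (Fin 2) => Γex j k l) p (EuclideanSpace.single i 1)
  - fderiv ℝ (fun _ : EuclideanSpace ℝ (Fin 2) => Γex i k l) p (EuclideanSpace.single j 1)
  + ∑ n : Fin 2, (Γex i n l * Γex j k n - Γex j n l * Γex i k n)

/-- The matrix of the Jacobi operator `J_X(Y) = R(Y,X)X`, i.e.
`(J_X)ˡᵢ = ∑_{j,k} X^j X^k R_{ijk}{}^l`. -/
noncomputable def jacMat (p : EuclideanSpace ℝ (Fin 2)) (X : Fin 2 → ℝ) :
    Matrix (Fin 2) (Fin 2) ℝ :=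
  Matrix.of fun l i => ∑ j : Fin 2, ∑ k : Fin 2, X j * X k * Rex p i j k l

/-! The Jacobi operator of a nonzero `X` is, up to the factor `|X|²`, the projection onto `X^⊥`
along `X`: its matrix has determinant `0` and trace `X ⬝ᵥ X > 0`, and a `2 × 2` matrix of
determinant `0` has characteristic polynomial `x (x - tr)`. -/

theorem Matrix.spectrum_toLin'_fin_two_of_det_eq_zero {K : Type*} [Field K]
    (A : Matrix (Fin 2) (Fin 2) K) (hA : A.det = 0) :
    spectrum K A.toLin' = {0, A.trace} := by
  ext x
  have hroot : x ^ 2 - A.trace * x = x * (x - A.trace) := by ring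
  rw [Matrix.spectrum_toLin', Matrix.mem_spectrum_iff_isRoot_charpoly, Matrix.charpoly_fin_two,
    hA]
  simp [hroot, sub_eq_zero]

theorem Rex_eq_sum (p : EuclideanSpace ℝ (Fin 2)) (i j k l : Fin 2) :
    Rex p i j k l = ∑ n : Fin 2, (Γex i n l * Γex j k n - Γex j n l * Γex i k n) := by
  simp [Rex]

theorem jacMat_eq (p : EuclideanSpace ℝ (Fin 2)) (X : Fin 2 → ℝ) :
    jacMat p X = !![X 1 ^ 2, -(X 0 * X 1); -(X 0 * X 1), X 0 ^ 2] := by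
  ext l i
  fin_cases l <;> fin_cases i <;>
    simp [jacMat, Rex_eq_sum, Fin.sum_univ_two, Γex] <;> ring

theorem det_jacMat (p : EuclideanSpace ℝ (Fin 2)) (X : Fin 2 → ℝ) : (jacMat p X).det = 0 := by
  rw [jacMat_eq, Matrix.det_fin_two_of]
  ring

theorem trace_jacMat (p : EuclideanSpace ℝ (Fin 2)) (X : Fin 2 → ℝ) :
    (jacMat p X).trace = X ⬝ᵥ X := by
  rw [jacMat_eq, Matrix.trace_fin_two_of, dotProduct, Fin.sum_univ_two]
  ring

theorem stmt17 (p : EuclideanSpace ℝ (Fin 2)) :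
    (∀ l : Fin 2, Rex p 0 1 1 l = if l = 0 then 1 else 0) ∧
    (∀ l : Fin 2, Rex p 1 0 0 l = if l = 1 then 1 else 0) ∧
    (∀ X : Fin 2 → ℝ, X ≠ 0 → ∃ lam > (0 : ℝ),
      spectrum ℝ (Matrix.toLin' (jacMat p X)) = {0, lam} ∧ (jacMat p X).trace > 0) := by
  refine ⟨?_, ?_, fun X hX => ?_⟩
  · intro l
    fin_cases l <;> norm_num [Rex_eq_sum, Fin.sum_univ_two, Γex]
  · intro l
    fin_cases l <;> norm_num [Rex_eq_sum, Fin.sum_univ_two, Γex]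
  · have htrace : 0 < (jacMat p X).trace := by
      simpa [trace_jacMat] using Matrix.dotProduct_self_star_pos_iff.mpr hX
    exact ⟨_, htrace,
      (jacMat p X).spectrum_toLin'_fin_two_of_det_eq_zero (det_jacMat p X), htrace⟩
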